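/- Let α, β, γ ∈ ℂ with α + β + γ = 0 and Re α = Re β = Re γ = 0, and fix y₂ > 0. Then there exists a constant C > 0 (depending on α, β, γ and y₂) such that |W(y₁,y₂)| ≤ C·y₁·e^{−2πy₁} for all y₁ ≥ 1; in particular Jacquet's Whittaker function decays rapidly as y₁ → ∞. -/

import Mathlib

open MeasureTheory Real Set

/-- The modified Bessel function of the second kind `K_μ(x)`, defined for `x > 0` by
`K_μ(x) = ∫₀^∞ exp(−x·cosh t)·cosh(μt) dt`. -/
noncomputable def besselK (μ : ℂ) (x : ℝ) : ℂ :=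
  ∫ t in Ioi (0 : ℝ), Complex.exp (-(x : ℂ) * Real.cosh t) * Complex.cosh (μ * t)

/-- Jacquet's Whittaker function for `SL(3,ℤ)`, defined for `y₁, y₂ > 0` by Stade's formula
`W(y₁,y₂) = 16·(πy₁)^{1−γ/2}·(πy₂)^{1+γ/2} ∫₀^∞ K_{(α−β)/2}(2πy₁√(1+u))·
K_{(α−β)/2}(2πy₂√(1+1/u))·u^{−3γ/4−1} du`. -/
noncomputable def jacquetW (α β γ : ℂ) (y₁ y₂ : ℝ) : ℂ :=
  16 * ((π * y₁ : ℝ) : ℂ) ^ (1 - γ / 2) * ((π * y₂ : ℝ) : ℂ) ^ (1 + γ / 2) *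
    ∫ u in Ioi (0 : ℝ),
      besselK ((α - β) / 2) (2 * π * y₁ * Real.sqrt (1 + u))
        * besselK ((α - β) / 2) (2 * π * y₂ * Real.sqrt (1 + u⁻¹))
        * (u : ℂ) ^ (-(3 * γ) / 4 - 1)

lemma norm_cosh_le_one {z : ℂ} (hz : z.re = 0) : ‖Complex.cosh z‖ ≤ 1 := by
  have h2 : Complex.cosh z = (Complex.exp z + Complex.exp (-z)) / 2 := by
    rw [← Complex.two_cosh]; ring
  rw [h2]
  have h1 : ‖Complex.exp z‖ = 1 := by
    rw [Complex.norm_exp, hz, Real.exp_zero]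
  have h1' : ‖Complex.exp (-z)‖ = 1 := by
    rw [Complex.norm_exp]
    simp [hz]
  rw [norm_div]
  have hn : ‖(2 : ℂ)‖ = 2 := by norm_num
  have hadd := norm_add_le (Complex.exp z) (Complex.exp (-z))
  rw [h1, h1'] at hadd
  rw [hn]
  linarith

lemma cosh_integrand_integrable {x₀ : ℝ} (hx₀ : 0 < x₀) :
    IntegrableOn (fun t : ℝ => Real.exp (-x₀ * Real.cosh t)) (Ioi 0) := by
  apply (exp_neg_integrableOn_Ioi 0 hx₀).mono'
    ((by fun_prop : Measurable fun t : ℝ => Real.exp (-x₀ * Real.cosh t)).aestronglyMeasurable)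
  filter_upwards [ae_restrict_mem measurableSet_Ioi] with t ht
  rw [Real.norm_eq_abs, abs_of_pos (Real.exp_pos _), Real.exp_le_exp]
  have h1 : t ≤ Real.cosh t := by
    have := Real.cosh_sub_sinh t
    rcases le_or_gt t 0 with h | h
    · linarith [Real.one_le_cosh t]
    · nlinarith [(Real.self_lt_sinh_iff.mpr h).le, Real.exp_pos (-t)]
  nlinarith

lemma besselK_bound {μ : ℂ} (hμ : μ.re = 0) {x₀ x : ℝ} (hx₀ : 0 < x₀) (hx : x₀ ≤ x) :
    ‖besselK μ x‖ ≤ Real.exp (x₀ - x) * ∫ t in Ioi (0 : ℝ), Real.exp (-x₀ * Real.cosh t) := by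
  rw [besselK, ← MeasureTheory.integral_const_mul]
  apply norm_integral_le_of_norm_le (((cosh_integrand_integrable hx₀).const_mul _))
  filter_upwards [ae_restrict_mem measurableSet_Ioi] with t ht
  rw [norm_mul]
  have hc : ‖Complex.cosh (μ * t)‖ ≤ 1 := by
    apply norm_cosh_le_one
    simp [Complex.mul_re, hμ]
  have he : ‖Complex.exp (-(x : ℂ) * Real.cosh t)‖ = Real.exp (-x * Real.cosh t) := by
    rw [Complex.norm_exp]
    norm_num
  calc ‖Complex.exp (-(x : ℂ) * Real.cosh t)‖ * ‖Complex.cosh (μ * t)‖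
      ≤ Real.exp (-x * Real.cosh t) * 1 := by rw [he]; gcongr
    _ ≤ Real.exp (x₀ - x) * Real.exp (-x₀ * Real.cosh t) := by
        rw [mul_one, ← Real.exp_add, Real.exp_le_exp]
        nlinarith [Real.one_le_cosh t]

lemma exp_sq_bound {x : ℝ} (hx : 0 ≤ x) : x ^ 2 / 4 ≤ Real.exp x := by
  have h := Real.add_one_le_exp (x / 2)
  have h2 : (x / 2 + 1) ^ 2 ≤ (Real.exp (x / 2)) ^ 2 := by
    apply sq_le_sq' <;> nlinarith
  have h4 : Real.exp (x / 2) ^ 2 = Real.exp x := by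
    rw [sq, ← Real.exp_add]
    norm_num
  rw [h4] at h2
  nlinarith [Real.exp_nonneg (x / 2)]

noncomputable def auxG (y₂ : ℝ) (u : ℝ) : ℝ :=
  Real.exp (-(2 * π) * Real.sqrt (1 + u)) *
    (Real.exp (-(2 * π * y₂) * Real.sqrt (1 + u⁻¹)) * u⁻¹)

lemma auxG_nonneg (y₂ : ℝ) {u : ℝ} (hu : 0 < u) : 0 ≤ auxG y₂ u := by
  unfold auxG
  have := hu.le
  positivity

lemma auxG_integrable {y₂ : ℝ} (hy₂ : 0 < y₂) : IntegrableOn (auxG y₂) (Ioi 0) := by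
  have hπ := Real.pi_pos
  have hmeas : Measurable (auxG y₂) := by unfold auxG; fun_prop
  rw [← Ioc_union_Ioi_eq_Ioi (zero_le_one (α := ℝ))]
  apply IntegrableOn.union
  · -- on Ioc 0 1, bounded by a constant
    apply Integrable.mono' (g := fun _ : ℝ => 4 / (2 * π * y₂) ^ 2)
      (integrableOn_const measure_Ioc_lt_top.ne)
      hmeas.aestronglyMeasurable.restrict
    filter_upwards [ae_restrict_mem measurableSet_Ioc] with u hu
    obtain ⟨hu0, hu1⟩ := hu
    have hui : 0 < u⁻¹ := inv_pos.mpr hu0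
    set v := Real.sqrt (1 + u⁻¹) with hv
    have hv0 : 0 ≤ v := Real.sqrt_nonneg _
    have hveq : v ^ 2 = 1 + u⁻¹ := Real.sq_sqrt (by positivity)
    set c := 2 * π * y₂ with hc
    have hc0 : 0 < c := by positivity
    rw [Real.norm_eq_abs, abs_of_nonneg (auxG_nonneg y₂ hu0)]
    unfold auxG
    have h1 : Real.exp (-(2 * π) * Real.sqrt (1 + u)) ≤ 1 := by
      rw [Real.exp_le_one_iff]
      have := Real.sqrt_nonneg (1 + u)
      nlinarith
    have key : Real.exp (-c * v) * u⁻¹ ≤ 4 / c ^ 2 := by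
      have hbig : c ^ 2 * u⁻¹ / 4 ≤ Real.exp (c * v) := by
        have h2 : (c * v) ^ 2 / 4 ≤ Real.exp (c * v) := exp_sq_bound (by positivity)
        nlinarith [hveq, sq_nonneg c]
      have h3 : Real.exp (-c * v) * (c ^ 2 * u⁻¹ / 4) ≤ 1 := by
        calc Real.exp (-c * v) * (c ^ 2 * u⁻¹ / 4)
            ≤ Real.exp (-c * v) * Real.exp (c * v) :=
              mul_le_mul_of_nonneg_left hbig (Real.exp_nonneg _)
          _ = 1 := by rw [← Real.exp_add]; ring_nf; exact Real.exp_zero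
      have h5 : Real.exp (-c * v) * (c ^ 2 * u⁻¹ / 4) * (4 / c ^ 2)
          = Real.exp (-c * v) * u⁻¹ := by
        field_simp
      calc Real.exp (-c * v) * u⁻¹
          = Real.exp (-c * v) * (c ^ 2 * u⁻¹ / 4) * (4 / c ^ 2) := h5.symm
        _ ≤ 1 * (4 / c ^ 2) := mul_le_mul_of_nonneg_right h3 (by positivity)
        _ = 4 / c ^ 2 := one_mul _
    calc Real.exp (-(2 * π) * Real.sqrt (1 + u)) * (Real.exp (-c * v) * u⁻¹)
        ≤ 1 * (4 / c ^ 2) := by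
          apply mul_le_mul h1 key (by positivity) (by norm_num)
      _ = 4 / c ^ 2 := one_mul _
  · -- on Ioi 1, bounded by u ^ (-2)
    apply Integrable.mono' (g := fun u : ℝ => u ^ (-2 : ℝ))
      (integrableOn_Ioi_rpow_of_lt (by norm_num) one_pos)
      hmeas.aestronglyMeasurable.restrict
    filter_upwards [ae_restrict_mem measurableSet_Ioi] with u hu
    have hu1 : (1 : ℝ) < u := hu
    have hu0 : (0 : ℝ) < u := by linarith
    rw [Real.norm_eq_abs, abs_of_nonneg (auxG_nonneg y₂ hu0)]
    unfold auxG
    have h2 : Real.exp (-(2 * π * y₂) * Real.sqrt (1 + u⁻¹)) * u⁻¹ ≤ 1 := by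
      have ha : Real.exp (-(2 * π * y₂) * Real.sqrt (1 + u⁻¹)) ≤ 1 := by
        rw [Real.exp_le_one_iff]
        have h0 : 0 ≤ 2 * π * y₂ * Real.sqrt (1 + u⁻¹) :=
          mul_nonneg (mul_nonneg (by positivity) hy₂.le) (Real.sqrt_nonneg _)
        linarith
      have hb : u⁻¹ ≤ 1 := by
        rw [inv_le_one_iff₀]; right; linarith
      nlinarith [Real.exp_nonneg (-(2 * π * y₂) * Real.sqrt (1 + u⁻¹)), inv_pos.mpr hu0]
    have h3 : Real.exp (-(2 * π) * Real.sqrt (1 + u)) ≤ u ^ (-2 : ℝ) := by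
      rw [Real.rpow_def_of_pos hu0]
      rw [Real.exp_le_exp]
      have hlog : Real.log u ≤ 2 * Real.sqrt u - 2 := by
        have := Real.log_le_sub_one_of_pos (Real.sqrt_pos.mpr hu0)
        have hls := Real.log_sqrt hu0.le
        linarith
      have hsq : Real.sqrt u ≤ Real.sqrt (1 + u) := Real.sqrt_le_sqrt (by linarith)
      have hπ3 := Real.pi_gt_three
      nlinarith [Real.sqrt_nonneg u, Real.sqrt_nonneg (1 + u)]
    calc Real.exp (-(2 * π) * Real.sqrt (1 + u)) *
          (Real.exp (-(2 * π * y₂) * Real.sqrt (1 + u⁻¹)) * u⁻¹)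
        ≤ u ^ (-2 : ℝ) * 1 := by
          apply mul_le_mul h3 h2 (by positivity) (by positivity)
      _ = u ^ (-2 : ℝ) := mul_one _


/-- Exponential decay of Jacquet's Whittaker function in the first variable:
for fixed `y₂ > 0` there is `C > 0` with `|W(y₁,y₂)| ≤ C·y₁·e^{−2πy₁}` for all `y₁ ≥ 1`. -/
theorem jacquetW_decay (α β γ : ℂ) (hsum : α + β + γ = 0)
    (hα : α.re = 0) (hβ : β.re = 0) (hγ : γ.re = 0)
    (y₂ : ℝ) (hy₂ : 0 < y₂) :
    ∃ C : ℝ, 0 < C ∧ ∀ y₁ : ℝ, 1 ≤ y₁ →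
      ‖jacquetW α β γ y₁ y₂‖ ≤ C * y₁ * Real.exp (-(2 * π * y₁)) := by
  have hπ := Real.pi_pos
  have hμ : ((α - β) / 2).re = 0 := by simp [Complex.div_re, hα, hβ]
  set K1 : ℝ := ∫ t in Ioi (0 : ℝ), Real.exp (-(2 * π) * Real.cosh t) with hK1def
  set K2 : ℝ := ∫ t in Ioi (0 : ℝ), Real.exp (-(2 * π * y₂) * Real.cosh t) with hK2def
  have hK1 : 0 ≤ K1 := setIntegral_nonneg measurableSet_Ioi fun t _ => (Real.exp_pos _).le
  have hK2 : 0 ≤ K2 := setIntegral_nonneg measurableSet_Ioi fun t _ => (Real.exp_pos _).le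
  set IF : ℝ := ∫ u in Ioi (0 : ℝ), auxG y₂ u with hIFdef
  have hIF : 0 ≤ IF :=
    setIntegral_nonneg measurableSet_Ioi fun u hu => auxG_nonneg y₂ hu
  set cc : ℝ := Real.exp (4 * π) * K1 * (Real.exp (2 * π * y₂) * K2) with hccdef
  have hcc : 0 ≤ cc :=
    mul_nonneg (mul_nonneg (Real.exp_nonneg _) hK1)
      (mul_nonneg (Real.exp_nonneg _) hK2)
  set D : ℝ := 16 * π ^ 2 * y₂ * cc * IF with hDdef
  have hD : 0 ≤ D :=
    mul_nonneg (mul_nonneg (by positivity) hcc) hIF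
  refine ⟨D + 1, by linarith, fun y₁ hy₁ => ?_⟩
  have hy₁0 : (0 : ℝ) < y₁ := lt_of_lt_of_le one_pos hy₁
  -- pointwise bound on the integrand
  have hpt : ∀ u ∈ Ioi (0 : ℝ),
      ‖besselK ((α - β) / 2) (2 * π * y₁ * Real.sqrt (1 + u))
        * besselK ((α - β) / 2) (2 * π * y₂ * Real.sqrt (1 + u⁻¹))
        * (u : ℂ) ^ (-(3 * γ) / 4 - 1)‖ ≤
      (cc * Real.exp (-(2 * π * y₁))) * auxG y₂ u := by
    intro u hu
    have hu0 : (0 : ℝ) < u := hu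
    have hui : (0 : ℝ) < u⁻¹ := inv_pos.mpr hu0
    have hs1 : 1 ≤ Real.sqrt (1 + u) := by
      rw [Real.le_sqrt zero_le_one (by linarith)]
      nlinarith
    have hs2 : 1 ≤ Real.sqrt (1 + u⁻¹) := by
      rw [Real.le_sqrt zero_le_one (by linarith)]
      nlinarith
    have hx1 : 2 * π ≤ 2 * π * y₁ * Real.sqrt (1 + u) := by
      nlinarith [mul_nonneg (sub_nonneg.mpr hy₁) (sub_nonneg.mpr hs1)]
    have hx2 : 2 * π * y₂ ≤ 2 * π * y₂ * Real.sqrt (1 + u⁻¹) := by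
      nlinarith [mul_nonneg (mul_nonneg (mul_pos two_pos hπ).le hy₂.le)
        (sub_nonneg.mpr hs2)]
    have hb1 := besselK_bound hμ (by positivity) hx1
    have hb2 := besselK_bound hμ (by positivity : (0:ℝ) < 2 * π * y₂) hx2
    rw [← hK1def] at hb1
    rw [← hK2def] at hb2
    have hb3 : ‖(u : ℂ) ^ (-(3 * γ) / 4 - 1)‖ = u⁻¹ := by
      rw [Complex.norm_cpow_eq_rpow_re_of_pos hu0,
        show (-(3 * γ) / 4 - 1 : ℂ).re = -1 by simp [Complex.div_re, hγ],
        Real.rpow_neg_one]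
    have hE1 : Real.exp (2 * π - 2 * π * y₁ * Real.sqrt (1 + u)) ≤
        Real.exp (4 * π) * Real.exp (-(2 * π * y₁)) *
          Real.exp (-(2 * π) * Real.sqrt (1 + u)) := by
      rw [← Real.exp_add, ← Real.exp_add, Real.exp_le_exp]
      nlinarith [mul_nonneg (sub_nonneg.mpr hy₁) (sub_nonneg.mpr hs1)]
    have hE2 : Real.exp (2 * π * y₂ - 2 * π * y₂ * Real.sqrt (1 + u⁻¹)) =
        Real.exp (2 * π * y₂) * Real.exp (-(2 * π * y₂) * Real.sqrt (1 + u⁻¹)) := by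
      rw [← Real.exp_add]; ring_nf
    calc ‖besselK ((α - β) / 2) (2 * π * y₁ * Real.sqrt (1 + u))
          * besselK ((α - β) / 2) (2 * π * y₂ * Real.sqrt (1 + u⁻¹))
          * (u : ℂ) ^ (-(3 * γ) / 4 - 1)‖
        = ‖besselK ((α - β) / 2) (2 * π * y₁ * Real.sqrt (1 + u))‖
          * ‖besselK ((α - β) / 2) (2 * π * y₂ * Real.sqrt (1 + u⁻¹))‖ * u⁻¹ := by
          rw [norm_mul, norm_mul, hb3]
      _ ≤ (Real.exp (2 * π - 2 * π * y₁ * Real.sqrt (1 + u)) * K1)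
          * (Real.exp (2 * π * y₂ - 2 * π * y₂ * Real.sqrt (1 + u⁻¹)) * K2) * u⁻¹ :=
          mul_le_mul_of_nonneg_right
            (mul_le_mul hb1 hb2 (norm_nonneg _)
              (mul_nonneg (Real.exp_nonneg _) hK1)) hui.le
      _ = (Real.exp (2 * π - 2 * π * y₁ * Real.sqrt (1 + u))
          * Real.exp (2 * π * y₂ - 2 * π * y₂ * Real.sqrt (1 + u⁻¹)))
          * (K1 * K2 * u⁻¹) := by ring
      _ ≤ ((Real.exp (4 * π) * Real.exp (-(2 * π * y₁)) *
            Real.exp (-(2 * π) * Real.sqrt (1 + u)))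
          * (Real.exp (2 * π * y₂) * Real.exp (-(2 * π * y₂) * Real.sqrt (1 + u⁻¹))))
          * (K1 * K2 * u⁻¹) := by
          apply mul_le_mul_of_nonneg_right _
            (mul_nonneg (mul_nonneg hK1 hK2) hui.le)
          rw [hE2]
          exact mul_le_mul_of_nonneg_right hE1 (by positivity)
      _ = (cc * Real.exp (-(2 * π * y₁))) * auxG y₂ u := by
          rw [hccdef]; unfold auxG; ring
  -- bound the integral
  have hI : ‖∫ u in Ioi (0 : ℝ),
      besselK ((α - β) / 2) (2 * π * y₁ * Real.sqrt (1 + u))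
        * besselK ((α - β) / 2) (2 * π * y₂ * Real.sqrt (1 + u⁻¹))
        * (u : ℂ) ^ (-(3 * γ) / 4 - 1)‖ ≤
      (cc * Real.exp (-(2 * π * y₁))) * IF := by
    rw [hIFdef, ← MeasureTheory.integral_const_mul]
    apply norm_integral_le_of_norm_le ((auxG_integrable hy₂).const_mul _)
    filter_upwards [ae_restrict_mem measurableSet_Ioi] with u hu
    exact hpt u hu
  have hp1 : ‖((π * y₁ : ℝ) : ℂ) ^ (1 - γ / 2)‖ = π * y₁ := by
    rw [Complex.norm_cpow_eq_rpow_re_of_pos (by positivity),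
      show (1 - γ / 2 : ℂ).re = 1 by simp [Complex.div_re, hγ], Real.rpow_one]
  have hp2 : ‖((π * y₂ : ℝ) : ℂ) ^ (1 + γ / 2)‖ = π * y₂ := by
    rw [Complex.norm_cpow_eq_rpow_re_of_pos (by positivity),
      show (1 + γ / 2 : ℂ).re = 1 by simp [Complex.div_re, hγ], Real.rpow_one]
  have h16 : ‖(16 : ℂ)‖ = 16 := by norm_num
  calc ‖jacquetW α β γ y₁ y₂‖
      = 16 * (π * y₁) * (π * y₂) * ‖∫ u in Ioi (0 : ℝ),
        besselK ((α - β) / 2) (2 * π * y₁ * Real.sqrt (1 + u))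
          * besselK ((α - β) / 2) (2 * π * y₂ * Real.sqrt (1 + u⁻¹))
          * (u : ℂ) ^ (-(3 * γ) / 4 - 1)‖ := by
        rw [jacquetW, norm_mul, norm_mul, norm_mul, h16, hp1, hp2]
    _ ≤ 16 * (π * y₁) * (π * y₂) * ((cc * Real.exp (-(2 * π * y₁))) * IF) := by
        apply mul_le_mul_of_nonneg_left hI
        exact mul_nonneg (mul_nonneg (by norm_num) (mul_nonneg hπ.le hy₁0.le))
          (mul_nonneg hπ.le hy₂.le)
    _ = D * y₁ * Real.exp (-(2 * π * y₁)) := by rw [hDdef]; ring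
    _ ≤ (D + 1) * y₁ * Real.exp (-(2 * π * y₁)) := by
        have h0 : 0 ≤ y₁ * Real.exp (-(2 * π * y₁)) :=
          mul_nonneg hy₁0.le (Real.exp_nonneg _)
        nlinarith
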